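/- arXiv:2408.16185 — 3 statements merged into one kernel-verified Lean document; each statement's English description precedes it below -/
import Mathlib

section
/- For real numbers x and a with x > 0 and x^2 > a > 0, the following bounds hold: x + a/(2x) - a^2/(8x^3) + a^3/(16x^5) - 5a^4/(64x^7) < sqrt(x^2 + a) < x + a/(2x) - a^2/(8x^3) + a^3/(16x^5). -/
/-!
After the scaling `√(x ^ 2 + a) = x √(1 + t)` with `t = a / x ^ 2`, the upper bound is
`√(1 + t) < p(t)` for the cubic Taylor polynomial `p`, which holds because
`p(t) ^ 2 - (1 + t) = t ^ 4 ((t - 2) ^ 2 + 16) / 256 > 0`. The lower bound follows from it: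
`√(1 + t) = (1 + t) / √(1 + t) > (1 + t) / p(t)`, and `(1 + t) / p(t) ≥ p(t) - 5 t ^ 4 / 64` because
`1 + t - p(t) (p(t) - 5 t ^ 4 / 64) = t ^ 5 (5 t ^ 2 - 14 t + 56) / 1024 ≥ 0`.
-/

open Real

namespace Real

theorem sqrt_one_add_lt_taylor {t : ℝ} (ht : 0 < t) :
    √(1 + t) < 1 + t / 2 - t ^ 2 / 8 + t ^ 3 / 16 := by
  have hp : 0 < 1 + t / 2 - t ^ 2 / 8 + t ^ 3 / 16 := by nlinarith [sq_nonneg (t - 1)]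
  rw [sqrt_lt' hp]
  have key : (1 + t / 2 - t ^ 2 / 8 + t ^ 3 / 16) ^ 2 - (1 + t) =
      t ^ 4 * ((t - 2) ^ 2 + 16) / 256 := by
    ring
  nlinarith [show 0 < t ^ 4 * ((t - 2) ^ 2 + 16) / 256 by positivity]

theorem taylor_sub_lt_sqrt_one_add {t : ℝ} (ht : 0 < t) :
    1 + t / 2 - t ^ 2 / 8 + t ^ 3 / 16 - 5 * t ^ 4 / 64 < √(1 + t) := by
  set p := 1 + t / 2 - t ^ 2 / 8 + t ^ 3 / 16
  have hsp : √(1 + t) < p := sqrt_one_add_lt_taylor ht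
  have hs : 0 < √(1 + t) := sqrt_pos.mpr (by linarith)
  have hsq : √(1 + t) ^ 2 = 1 + t := sq_sqrt (by linarith)
  have hpq : p * (p - 5 * t ^ 4 / 64) ≤ 1 + t := by
    have key : 1 + t - p * (p - 5 * t ^ 4 / 64) =
        t ^ 5 * (5 * (t - 7 / 5) ^ 2 + 231 / 5) / 1024 := by
      ring
    nlinarith [show 0 ≤ t ^ 5 * (5 * (t - 7 / 5) ^ 2 + 231 / 5) / 1024 by positivity]
  by_contra! h
  nlinarith [mul_le_mul_of_nonneg_left h (hs.trans hsp).le]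

theorem sqrt_sq_add_eq_mul_sqrt_one_add {x : ℝ} (hx : 0 < x) (a : ℝ) :
    √(x ^ 2 + a) = x * √(1 + a / x ^ 2) := by
  rw [← sqrt_sq hx.le, ← sqrt_mul (sq_nonneg x), sqrt_sq hx.le]
  field_simp

end Real

theorem stmt_1_general (x a : ℝ) (hx : 0 < x) (ha : 0 < a) :
    x + a / (2 * x) - a ^ 2 / (8 * x ^ 3) + a ^ 3 / (16 * x ^ 5)
        - 5 * a ^ 4 / (64 * x ^ 7) < Real.sqrt (x ^ 2 + a) ∧
    Real.sqrt (x ^ 2 + a) <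
      x + a / (2 * x) - a ^ 2 / (8 * x ^ 3) + a ^ 3 / (16 * x ^ 5) := by
  have ht : 0 < a / x ^ 2 := by positivity
  have hupper : x + a / (2 * x) - a ^ 2 / (8 * x ^ 3) + a ^ 3 / (16 * x ^ 5) =
      x * (1 + a / x ^ 2 / 2 - (a / x ^ 2) ^ 2 / 8 + (a / x ^ 2) ^ 3 / 16) := by
    field_simp
  have hlower : x + a / (2 * x) - a ^ 2 / (8 * x ^ 3) + a ^ 3 / (16 * x ^ 5)
        - 5 * a ^ 4 / (64 * x ^ 7) =
      x * (1 + a / x ^ 2 / 2 - (a / x ^ 2) ^ 2 / 8 + (a / x ^ 2) ^ 3 / 16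
        - 5 * (a / x ^ 2) ^ 4 / 64) := by
    field_simp
  rw [sqrt_sq_add_eq_mul_sqrt_one_add hx, hlower, hupper]
  exact ⟨mul_lt_mul_of_pos_left (taylor_sub_lt_sqrt_one_add ht) hx,
    mul_lt_mul_of_pos_left (sqrt_one_add_lt_taylor ht) hx⟩

theorem stmt_1 (x a : ℝ) (hx : 0 < x) (ha : 0 < a) (hxa : a < x ^ 2) :
    x + a / (2 * x) - a ^ 2 / (8 * x ^ 3) + a ^ 3 / (16 * x ^ 5)
        - 5 * a ^ 4 / (64 * x ^ 7) < Real.sqrt (x ^ 2 + a) ∧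
    Real.sqrt (x ^ 2 + a) <
      x + a / (2 * x) - a ^ 2 / (8 * x ^ 3) + a ^ 3 / (16 * x ^ 5) :=
  stmt_1_general x a hx ha
end

section
/- Let x > 0 and define x₂₁ = ȟ_x(4π²/3), x₁₁ = ȟ_x(2π²/3), z₂ = ĥ_x(8π²/9), where ȟ_x(a) = x + a/(2x) − a²/(8x³) + a³/(16x⁵) − 5a⁴/(64x⁷) and ĥ_x(a) = x + a/(2x) − a²/(8x³) + a³/(16x⁵). Then for x ≥ 4, x₂₁ + 2x₁₁ − 3z₂ = −π⁴(18x⁴ − 26π²x² + 135π⁴)/(486x⁷) < 0. -/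
noncomputable def hLow (x a : ℝ) : ℝ :=
  x + a / (2 * x) - a ^ 2 / (8 * x ^ 3) + a ^ 3 / (16 * x ^ 5) - 5 * a ^ 4 / (64 * x ^ 7)

noncomputable def hUp (x a : ℝ) : ℝ :=
  x + a / (2 * x) - a ^ 2 / (8 * x ^ 3) + a ^ 3 / (16 * x ^ 5)

theorem stmt_10 (x : ℝ) (hx : 4 ≤ x) :
    hLow x (4 * Real.pi ^ 2 / 3) + 2 * hLow x (2 * Real.pi ^ 2 / 3)
        - 3 * hUp x (8 * Real.pi ^ 2 / 9) =
      -Real.pi ^ 4 * (18 * x ^ 4 - 26 * Real.pi ^ 2 * x ^ 2 + 135 * Real.pi ^ 4)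
        / (486 * x ^ 7) ∧
    hLow x (4 * Real.pi ^ 2 / 3) + 2 * hLow x (2 * Real.pi ^ 2 / 3)
        - 3 * hUp x (8 * Real.pi ^ 2 / 9) < 0 := by
  have hx0 : (0:ℝ) < x := by linarith
  have heq : hLow x (4 * Real.pi ^ 2 / 3) + 2 * hLow x (2 * Real.pi ^ 2 / 3)
        - 3 * hUp x (8 * Real.pi ^ 2 / 9) =
      -Real.pi ^ 4 * (18 * x ^ 4 - 26 * Real.pi ^ 2 * x ^ 2 + 135 * Real.pi ^ 4)
        / (486 * x ^ 7) := by
    unfold hLow hUp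
    field_simp
    ring
  refine ⟨heq, ?_⟩
  rw [heq]
  have hpi : (0:ℝ) < Real.pi := Real.pi_pos
  have hpos : 0 < 18 * x ^ 4 - 26 * Real.pi ^ 2 * x ^ 2 + 135 * Real.pi ^ 4 := by
    nlinarith [sq_nonneg (18 * x ^ 2 - 13 * Real.pi ^ 2), pow_pos Real.pi_pos 4]
  have hx7 : 0 < 486 * x ^ 7 := by positivity
  have : 0 < Real.pi ^ 4 := by positivity
  have hnum : -Real.pi ^ 4 * (18 * x ^ 4 - 26 * Real.pi ^ 2 * x ^ 2 + 135 * Real.pi ^ 4) < 0 := by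
    nlinarith
  exact div_neg_of_neg_of_pos hnum hx7
end

section
/- For y ≥ 5 and θ = √(y² + 5π²/27), x = √(y² − 5π²/9), z = √(y² + 5π²/9): the quantity W₁ = √(θ⁹/(y⁶z³)) satisfies W₁ > 1 + 25π⁴/(324y⁴) − 250π⁶/(6561y⁶) + 38125π⁸/(1889568y⁸) − 34375π¹⁰/(3188646y¹⁰). -/
/-! With `t = 5π²/(27y²)` one has `θ² = y²(1 + t)` and `z² = y²(1 + 3t)`, so
`W₁⁴ = (1 + t)⁹ / (1 + 3t)³`, while the lower bound is the degree-5 Taylor polynomial `g(t)` of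
`W₁` in `t`. Since `π² < 10` and `y ≥ 5` give `t < 1/10`, it suffices to show the polynomial
inequality `g(t)⁴ (1 + 3t)³ < (1 + t)⁹` for `0 < t ≤ 1/10`. -/

open Real

lemma truncation_pow_four_mul_lt {t : ℝ} (h0 : 0 < t) (h1 : t ≤ 1 / 10) :
    (1 + 9/4 * t^2 - 6 * t^3 + 549/32 * t^4 - 99/2 * t^5) ^ 4 * (1 + 3 * t) ^ 3 < (1 + t) ^ 9 := by
  -- The difference is `t ^ 6` times this cofactor, whose constant term `18375/32` outweighs
  -- its negative coefficients, all multiplied by `t ^ 6 ≤ 10⁻⁶`.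
  have hcofactor : 0 < 18375/32 + 111879/32 * t + 4718727/512 * t^2 + 6797087/512 * t^3
      + 11636541/1024 * t^4 + 5404077/1024 * t^5 - 62337681/512 * t^6
      - 201855969/512 * t^7 - 18411625701/32768 * t^8 - 8928428229/32768 * t^9
      - 232344402129/1048576 * t^10 + 395657109351/1048576 * t^11
      + 11369452621653/1048576 * t^12 + 6052163199957/1048576 * t^13
      + 191146842117/16384 * t^14 - 50650401681/2048 * t^15
      + 4008305169/64 * t^16 - 2593609227/16 * t^17 := by
    have h6 : t ^ 6 ≤ (1 / 10) ^ 6 := pow_le_pow_left₀ h0.le h1 6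
    have hle : ∀ k, 6 ≤ k → t ^ k ≤ t ^ 6 := fun k hk => pow_le_pow_of_le_one h0.le (by linarith) hk
    have hnn : ∀ k, 0 ≤ t ^ k := fun k => pow_nonneg h0.le k
    linarith [hle 7 (by norm_num), hle 8 (by norm_num), hle 9 (by norm_num), hle 10 (by norm_num),
      hle 15 (by norm_num), hle 17 (by norm_num), hnn 1, hnn 2, hnn 3, hnn 4, hnn 5, hnn 11, hnn 12,
      hnn 13, hnn 14, hnn 16]
  linarith [mul_pos (pow_pos h0 6) hcofactor]

lemma lt_sqrt_of_pow_four_lt_sq {x q : ℝ} (hx : 0 ≤ x) (hq : 0 ≤ q) (h : x ^ 4 < q ^ 2) :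
    x < √q :=
  (lt_sqrt hx).mpr <| lt_of_pow_lt_pow_left₀ 2 hq (by rwa [← pow_mul])

lemma sq_sqrt_pow_div_mul_sqrt_pow {a b : ℝ} (c : ℝ) (m n : ℕ) (ha : 0 ≤ a) (hb : 0 ≤ b) :
    (√a ^ m / (c * √b ^ n)) ^ 2 = a ^ m / (c ^ 2 * b ^ n) := by
  rw [div_pow, mul_pow, ← pow_mul, ← pow_mul, mul_comm m, mul_comm n, pow_mul, pow_mul,
    sq_sqrt ha, sq_sqrt hb]

theorem stmt_16 (y : ℝ) (hy : 5 ≤ y) :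
    1 + 25 * Real.pi ^ 4 / (324 * y ^ 4) - 250 * Real.pi ^ 6 / (6561 * y ^ 6)
        + 38125 * Real.pi ^ 8 / (1889568 * y ^ 8)
        - 34375 * Real.pi ^ 10 / (3188646 * y ^ 10) <
      Real.sqrt ((Real.sqrt (y ^ 2 + 5 * Real.pi ^ 2 / 27)) ^ 9 /
        (y ^ 6 * (Real.sqrt (y ^ 2 + 5 * Real.pi ^ 2 / 9)) ^ 3)) := by
  have hy0 : 0 < y := by linarith
  set t := 5 * π ^ 2 / (27 * y ^ 2) with ht
  have ht0 : 0 < t := by positivity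
  have ht1 : t ≤ 1 / 10 := by
    have hπ : π ^ 2 < 10 := by nlinarith [pi_lt_d2, pi_pos]
    rw [ht, div_le_iff₀ (by positivity)]
    nlinarith
  have hlhs : 1 + 25 * π ^ 4 / (324 * y ^ 4) - 250 * π ^ 6 / (6561 * y ^ 6)
      + 38125 * π ^ 8 / (1889568 * y ^ 8) - 34375 * π ^ 10 / (3188646 * y ^ 10)
      = 1 + 9/4 * t^2 - 6 * t^3 + 549/32 * t^4 - 99/2 * t^5 := by
    rw [ht]; field_simp; ring
  have hθ : y ^ 2 + 5 * π ^ 2 / 27 = y ^ 2 * (1 + t) := by rw [ht]; field_simp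
  have hz : y ^ 2 + 5 * π ^ 2 / 9 = y ^ 2 * (1 + 3 * t) := by rw [ht]; field_simp; ring
  rw [hlhs]
  apply lt_sqrt_of_pow_four_lt_sq (by nlinarith [pow_pos ht0 3, pow_pos ht0 5]) (by positivity)
  rw [sq_sqrt_pow_div_mul_sqrt_pow _ _ _ (by positivity) (by positivity), hθ, hz,
    lt_div_iff₀ (by positivity)]
  linarith [mul_lt_mul_of_pos_left (truncation_pow_four_mul_lt ht0 ht1) (pow_pos hy0 18)]
end
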